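/- arXiv:1708.03608 — 2 statements merged into one kernel-verified Lean document; each statement's English description precedes it below -/
import Mathlib

section
/- Suppose A is a binary matrix satisfying the main assumption with q > 2k(r-1), and x ∈ R^n is k-sparse with y = Ax. Then for every index j: j ∈ supp(x) if and only if the reduced measurement vector ȳ_j has more than q/2 nonzero components; moreover, when j ∈ supp(x), more than q/2 components of ȳ_j equal x_j, and this is the unique value attained by more than q/2 components. Consequently the decoding rule that sets x̂_j to the majority value of ȳ_j if ȳ_j has more than q/2 nonzero entries and to 0 otherwise recovers x exactly. -/
/-!
Within column `j`, a row `i` with `y i ≠ x j` must also lie in some other column `t` of the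
support of `x`. Columns share at most `r - 1` rows and the support has at most `k` elements,
so at most `k (r - 1) < q / 2` of the `q` entries of `ȳ_j` differ from `x j`: the value `x j`
is a strict majority of `ȳ_j`, hence the only one, and `ȳ_j` is mostly nonzero iff `x j ≠ 0`.
-/

open Finset Matrix

section Majority

variable {ι β : Type*} [Fintype ι] [DecidableEq β] {p : ι → Prop} [DecidablePred p]
  {f : ι → β}

lemma card_filter_and_eq_add_card_filter_and_ne (a : β) :
    #{i | p i ∧ f i = a} + #{i | p i ∧ f i ≠ a} = #{i | p i} := by
  rw [← card_filter_add_card_filter_not (s := {i | p i}) (fun i => f i = a),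
    filter_filter, filter_filter]

lemma card_filter_and_eq_le_card_filter_and_ne {a b : β} (hab : a ≠ b) :
    #{i | p i ∧ f i = a} ≤ #{i | p i ∧ f i ≠ b} :=
  card_le_card fun i hi => by
    simp only [mem_filter, mem_univ, true_and] at hi ⊢
    exact ⟨hi.1, hi.2 ▸ hab⟩

lemma eq_of_lt_two_mul_card_filter_and_eq {a b : β}
    (ha : #{i | p i} < 2 * #{i | p i ∧ f i = a})
    (hb : #{i | p i} < 2 * #{i | p i ∧ f i = b}) : a = b := by
  by_contra hab
  have hle := card_filter_and_eq_le_card_filter_and_ne (p := p) (f := f) hab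
  have hsplit := card_filter_and_eq_add_card_filter_and_ne (p := p) (f := f) b
  omega

end Majority

section BinaryMatrix

variable {R : Type*} [Semiring R] [DecidableEq R] {m n : Type*}

lemma sum_mul_eq_card_filter_of_zero_or_one [Fintype m] {u v : m → R}
    (hu : ∀ i, u i = 0 ∨ u i = 1) (hv : ∀ i, v i = 0 ∨ v i = 1) :
    ∑ i, u i * v i = #{i | u i = 1 ∧ v i = 1} := by
  rw [card_filter, Nat.cast_sum]
  refine sum_congr rfl fun i _ => ?_
  rcases hu i with h | h <;> rcases hv i with h' | h' <;> simp [h, h']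

lemma card_filter_eq_one_and_eq_one_le_of_sum_mul_le [Fintype m] [PartialOrder R]
    [IsStrictOrderedRing R] {A : Matrix m n R} (hbin : ∀ i j, A i j = 0 ∨ A i j = 1)
    {j t : n} {s : ℕ}
    (hjt : ∑ i, A i j * A i t ≤ (s : R)) :
    #{i | A i j = 1 ∧ A i t = 1} ≤ s := by
  rwa [sum_mul_eq_card_filter_of_zero_or_one (hbin · j) (hbin · t), Nat.cast_le] at hjt

lemma mulVec_apply_eq_of_forall_ne [Fintype n] {A : Matrix m n R}
    (hbin : ∀ i j, A i j = 0 ∨ A i j = 1)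
    {x : n → R} {i : m} {j : n} (hij : A i j = 1)
    (hothers : ∀ t ≠ j, x t ≠ 0 → A i t ≠ 1) :
    (A *ᵥ x) i = x j := by
  rw [mulVec, dotProduct, sum_eq_single j _ (by simp), hij, one_mul]
  intro t _ htj
  by_cases hxt : x t = 0
  · rw [hxt, mul_zero]
  · rw [(hbin i t).resolve_right (hothers t htj hxt), zero_mul]

variable [Fintype m] [Fintype n] [DecidableEq m] [DecidableEq n]

lemma card_filter_mulVec_ne_le {A : Matrix m n R} (hbin : ∀ i j, A i j = 0 ∨ A i j = 1)
    (x : n → R) (j : n) :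
    #{i | A i j = 1 ∧ (A *ᵥ x) i ≠ x j} ≤
      ∑ t ∈ ({t | x t ≠ 0} : Finset n).erase j, #{i | A i j = 1 ∧ A i t = 1} := by
  refine (card_le_card fun i hi => ?_).trans card_biUnion_le
  simp only [mem_filter, mem_univ, true_and] at hi
  by_contra hnot
  refine hi.2 (mulVec_apply_eq_of_forall_ne hbin hi.1 fun t htj hxt hit => hnot ?_)
  exact mem_biUnion.2 ⟨t, by simp [htj, hxt], by simp [hi.1, hit]⟩

lemma card_filter_mulVec_ne_le_mul {A : Matrix m n R} (hbin : ∀ i j, A i j = 0 ∨ A i j = 1)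
    {s k : ℕ} (hoverlap : ∀ j t, j ≠ t → #{i | A i j = 1 ∧ A i t = 1} ≤ s)
    {x : n → R} (hx : #{t | x t ≠ 0} ≤ k) (j : n) :
    #{i | A i j = 1 ∧ (A *ᵥ x) i ≠ x j} ≤ k * s :=
  calc #{i | A i j = 1 ∧ (A *ᵥ x) i ≠ x j}
      ≤ ∑ t ∈ ({t | x t ≠ 0} : Finset n).erase j, #{i | A i j = 1 ∧ A i t = 1} :=
        card_filter_mulVec_ne_le hbin x j
    _ ≤ ∑ _t ∈ ({t | x t ≠ 0} : Finset n).erase j, s :=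
        sum_le_sum fun t ht => hoverlap j t (ne_of_mem_erase ht).symm
    _ ≤ k * s := by
        rw [sum_const, smul_eq_mul]
        exact Nat.mul_le_mul_right s ((card_erase_le).trans hx)

end BinaryMatrix

/-- Under the main assumption with `q > 2k(r-1)`, for each `j`:
`j ∈ supp(x)` iff more than `q/2` components of `ȳ_j` are nonzero; when `j ∈ supp(x)`,
more than `q/2` components of `ȳ_j` equal `x j`, and `x j` is the unique value attained
by more than `q/2` components.  Consequently the majority decoding rule recovers `x`. -/
theorem stmt2 {m n q r k : ℕ}
    (A : Matrix (Fin m) (Fin n) ℝ)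
    (hbin : ∀ i j, A i j = 0 ∨ A i j = 1)
    (hcol : ∀ j : Fin n, (Finset.univ.filter (fun i => A i j = 1)).card = q)
    (hip : ∀ j t : Fin n, j ≠ t → ∑ i, A i j * A i t ≤ ((r - 1 : ℕ) : ℝ))
    (hq : 2 * k * (r - 1) < q)
    (x : Fin n → ℝ)
    (hx : (Finset.univ.filter (fun i => x i ≠ 0)).card ≤ k)
    (y : Fin m → ℝ) (hy : y = A.mulVec x) :
    (∀ j : Fin n,
      (x j ≠ 0 ↔ q < 2 * (Finset.univ.filter (fun i => A i j = 1 ∧ y i ≠ 0)).card) ∧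
      (x j ≠ 0 →
        q < 2 * (Finset.univ.filter (fun i => A i j = 1 ∧ y i = x j)).card ∧
        (∀ c : ℝ, q < 2 * (Finset.univ.filter (fun i => A i j = 1 ∧ y i = c)).card →
          c = x j)))
    ∧
    (∀ xhat : Fin n → ℝ,
      (∀ j : Fin n,
        (q < 2 * (Finset.univ.filter (fun i => A i j = 1 ∧ y i ≠ 0)).card →
          q < 2 * (Finset.univ.filter (fun i => A i j = 1 ∧ y i = xhat j)).card) ∧
        (¬ q < 2 * (Finset.univ.filter (fun i => A i j = 1 ∧ y i ≠ 0)).card →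
          xhat j = 0)) →
      xhat = x) := by
  subst hy
  have hminority j : 2 * #{i | A i j = 1 ∧ (A *ᵥ x) i ≠ x j} < q := by
    have := card_filter_mulVec_ne_le_mul hbin
      (fun j t hjt => card_filter_eq_one_and_eq_one_le_of_sum_mul_le hbin (hip j t hjt)) hx j
    rw [mul_assoc] at hq
    omega
  have hmajority j : q < 2 * #{i | A i j = 1 ∧ (A *ᵥ x) i = x j} := by
    have hsplit :=
      card_filter_and_eq_add_card_filter_and_ne (p := (A · j = 1)) (f := A *ᵥ x) (x j)
    rw [hcol j] at hsplit
    have := hminority j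
    omega
  have hunique j c (hc : q < 2 * #{i | A i j = 1 ∧ (A *ᵥ x) i = c}) : c = x j :=
    eq_of_lt_two_mul_card_filter_and_eq (p := (A · j = 1)) (f := A *ᵥ x)
      (by rwa [hcol j]) (by rw [hcol j]; exact hmajority j)
  have hsupport j : x j ≠ 0 ↔ q < 2 * #{i | A i j = 1 ∧ (A *ᵥ x) i ≠ 0} := by
    constructor
    · intro hxj
      exact (hmajority j).trans_le <| Nat.mul_le_mul_left 2 <|
        card_filter_and_eq_le_card_filter_and_ne (p := (A · j = 1)) (f := A *ᵥ x) hxj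
    · intro hlt hxj
      have := hminority j
      rw [hxj] at this
      omega
  refine ⟨fun j => ⟨hsupport j, fun _ => ⟨hmajority j, hunique j⟩⟩,
    fun xhat hdecode => ?_⟩
  funext j
  by_cases hxj : x j = 0
  · rw [hxj, (hdecode j).2 (mt (hsupport j).2 (not_not.2 hxj))]
  · exact hunique j _ ((hdecode j).1 ((hsupport j).1 hxj))
end

section
/- Let A ∈ {0,1}^{m×n} satisfy the main assumption (columns with exactly q ones, pairwise inner products ≤ r-1) with q > 2k(r-1). Then A gives exact recovery of order k: if x, x' ∈ Σ_k and Ax = Ax', then x = x'. Equivalently, no nonzero 2k-sparse vector lies in the null space of A. -/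
/-!
If `A *ᵥ z = 0` then `z` lies in the kernel of the Gram matrix `Aᵀ * A`, whose diagonal entries
are `q` and whose off-diagonal entries lie in `[0, r - 1]`. Hence
`0 = zᵀ Aᵀ A z ≥ q ‖z‖₂² - (r - 1) (‖z‖₁² - ‖z‖₂²)`, and Cauchy–Schwarz on the support gives
`‖z‖₁² ≤ s ‖z‖₂²` with `s ≤ 2k` the support size, so `0 ≥ (q - (r - 1)(s - 1)) ‖z‖₂²` forces
`z = 0`. Exact recovery of `k`-sparse vectors follows since `x - x'` is `2k`-sparse.
-/

open Finset Matrix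

section SparseQuadraticForm

variable {ι : Type*} [Fintype ι]

lemma sq_sum_abs_le_card_support_mul_sum_sq (z : ι → ℝ) :
    (∑ j, |z j|) ^ 2 ≤ #{j | z j ≠ 0} * ∑ j, z j ^ 2 := by
  have hsupp : ∀ f : ι → ℝ, (∀ j, z j = 0 → f j = 0) → ∑ j, f j = ∑ j ∈ {j | z j ≠ 0}, f j :=
    fun f hf => (sum_subset (subset_univ _) (by simp +contextual [hf])).symm
  rw [hsupp (|z ·|) (by simp +contextual), hsupp (z · ^ 2) (by simp +contextual)]
  simpa only [sq_abs] using sq_sum_le_card_mul_sum_sq (s := {j | z j ≠ 0}) (f := (|z ·|))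

-- Entrywise, `z j * G j t * z t` dominates `(d + c) z j ^ 2 [j = t] - c |z j| |z t|`,
-- whose double sum is explicit.
lemma sum_sq_mul_sub_sq_sum_abs_le_dotProduct_mulVec [DecidableEq ι] (G : Matrix ι ι ℝ)
    {d c : ℝ} (hd : ∀ j, d ≤ G j j) (hc : ∀ j t, j ≠ t → |G j t| ≤ c) (z : ι → ℝ) :
    (d + c) * ∑ j, z j ^ 2 - c * (∑ j, |z j|) ^ 2 ≤ z ⬝ᵥ G *ᵥ z := by
  have hentry : ∀ j t, (if j = t then (d + c) * z j ^ 2 else 0) - c * (|z j| * |z t|)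
      ≤ z j * (G j t * z t) := by
    intro j t
    split_ifs with hjt
    · subst hjt
      rw [abs_mul_abs_self]
      nlinarith [mul_le_mul_of_nonneg_right (hd j) (sq_nonneg (z j))]
    · have hG := mul_le_mul_of_nonneg_left (hc j t hjt)
        (mul_nonneg (abs_nonneg (z j)) (abs_nonneg (z t)))
      have := neg_abs_le (z j * (G j t * z t))
      simp only [abs_mul] at this
      linarith
  calc (d + c) * ∑ j, z j ^ 2 - c * (∑ j, |z j|) ^ 2
      = ∑ j, ∑ t, ((if j = t then (d + c) * z j ^ 2 else 0) - c * (|z j| * |z t|)) := by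
        simp only [sum_sub_distrib, sum_ite_eq, mem_univ, if_true, ← mul_sum, sq, sum_mul_sum]
    _ ≤ ∑ j, ∑ t, z j * (G j t * z t) := by gcongr with j _ t _; exact hentry j t
    _ = z ⬝ᵥ G *ᵥ z := by simp only [dotProduct, mulVec, mul_sum]

lemma eq_zero_of_mulVec_eq_zero_of_card_support [DecidableEq ι] (G : Matrix ι ι ℝ) {d c : ℝ}
    (hd : ∀ j, d ≤ G j j) (hc : ∀ j t, j ≠ t → |G j t| ≤ c) (hc0 : 0 ≤ c) {z : ι → ℝ}
    (hz : c * (#{j | z j ≠ 0} - 1) < d) (hGz : G *ᵥ z = 0) : z = 0 := by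
  set S := ∑ j, z j ^ 2
  have hform := sum_sq_mul_sub_sq_sum_abs_le_dotProduct_mulVec G hd hc z
  rw [hGz, dotProduct_zero] at hform
  have hCS := mul_le_mul_of_nonneg_left (sq_sum_abs_le_card_support_mul_sum_sq z) hc0
  have hS : S ≤ 0 := by
    by_contra! hS
    nlinarith [mul_lt_mul_of_pos_right hz hS]
  funext j
  exact pow_eq_zero_iff two_ne_zero |>.mp <|
    (sum_eq_zero_iff_of_nonneg fun j _ => sq_nonneg (z j)).mp
      (hS.antisymm (sum_nonneg fun j _ => sq_nonneg (z j))) j (mem_univ j)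

end SparseQuadraticForm

section BinaryGram

variable {m n : Type*} [Fintype m] (A : Matrix m n ℝ)

lemma transpose_mul_self_apply_self_of_binary (hbin : ∀ i j, A i j = 0 ∨ A i j = 1) (j : n) :
    (Aᵀ * A) j j = #{i | A i j = 1} := by
  rw [mul_apply, ← sum_boole]
  refine sum_congr rfl fun i _ => ?_
  rcases hbin i j with h | h <;> simp [h]

lemma transpose_mul_self_apply_nonneg (hA : ∀ i j, 0 ≤ A i j) (j t : n) :
    0 ≤ (Aᵀ * A) j t :=
  sum_nonneg fun i _ => mul_nonneg (hA i j) (hA i t)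

end BinaryGram

lemma card_support_sub_le {ι R : Type*} [Fintype ι] [DecidableEq ι] [AddGroup R]
    [DecidableEq R] (x x' : ι → R) :
    #{i | x i - x' i ≠ 0} ≤ #{i | x i ≠ 0} + #{i | x' i ≠ 0} := by
  refine (card_le_card fun i => ?_).trans (card_union_le _ _)
  simp only [mem_filter, mem_univ, true_and, mem_union]
  contrapose!
  rintro ⟨hx, hx'⟩
  rw [hx, hx', sub_zero]

lemma eq_of_mulVec_eq_of_card_support_le {m n R : Type*} [Fintype n] [DecidableEq n] [CommRing R]
    [DecidableEq R] {A : Matrix m n R} {k : ℕ}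
    (hnull : ∀ z : n → R, #{i | z i ≠ 0} ≤ 2 * k → A *ᵥ z = 0 → z = 0) {x x' : n → R}
    (hx : #{i | x i ≠ 0} ≤ k) (hx' : #{i | x' i ≠ 0} ≤ k) (hAx : A *ᵥ x = A *ᵥ x') : x = x' :=
  sub_eq_zero.mp <| hnull (x - x') (by simpa using (card_support_sub_le x x').trans (by omega))
    (by rw [mulVec_sub, hAx, sub_self])

/-- Under the main assumption with `q > 2k(r-1)`, `A` gives exact
recovery of order `k`: `k`-sparse vectors with equal measurements are equal;
equivalently, no nonzero `2k`-sparse vector lies in the null space of `A`. -/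
theorem stmt10 {m n q r k : ℕ}
    (A : Matrix (Fin m) (Fin n) ℝ)
    (hbin : ∀ i j, A i j = 0 ∨ A i j = 1)
    (hcol : ∀ j : Fin n, (Finset.univ.filter (fun i => A i j = 1)).card = q)
    (hip : ∀ j t : Fin n, j ≠ t → ∑ i, A i j * A i t ≤ ((r - 1 : ℕ) : ℝ))
    (hq : 2 * k * (r - 1) < q) :
    (∀ x x' : Fin n → ℝ,
      (Finset.univ.filter (fun i => x i ≠ 0)).card ≤ k →
      (Finset.univ.filter (fun i => x' i ≠ 0)).card ≤ k →
      A.mulVec x = A.mulVec x' → x = x') ∧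
    (∀ z : Fin n → ℝ,
      (Finset.univ.filter (fun i => z i ≠ 0)).card ≤ 2 * k →
      A.mulVec z = 0 → z = 0) := by
  have hA : ∀ i j, 0 ≤ A i j := fun i j => by rcases hbin i j with h | h <;> simp [h]
  have hdiag (j : Fin n) : (q : ℝ) ≤ (Aᵀ * A) j j := by
    rw [transpose_mul_self_apply_self_of_binary A hbin, hcol]
  have hoff (j t : Fin n) (hjt : j ≠ t) : |(Aᵀ * A) j t| ≤ ((r - 1 : ℕ) : ℝ) := by
    rw [abs_of_nonneg (transpose_mul_self_apply_nonneg A hA j t)]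
    exact hip j t hjt
  have hnull (z : Fin n → ℝ) (hz : #{i | z i ≠ 0} ≤ 2 * k) (hAz : A *ᵥ z = 0) : z = 0 := by
    refine eq_zero_of_mulVec_eq_zero_of_card_support _ hdiag hoff (Nat.cast_nonneg _) ?_
      (by rw [← mulVec_mulVec, hAz, mulVec_zero])
    have hz' : (#{i | z i ≠ 0} : ℝ) ≤ 2 * k := by exact_mod_cast hz
    have hq' : 2 * k * ((r - 1 : ℕ) : ℝ) < q := by exact_mod_cast hq
    nlinarith [(Nat.cast_nonneg (r - 1) : (0 : ℝ) ≤ _)]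
  exact ⟨fun x x' => eq_of_mulVec_eq_of_card_support_le hnull, hnull⟩
end
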